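/- arXiv:1210.1042 — 4 statements merged into one kernel-verified Lean document; each statement's English description precedes it below -/
import Mathlib

section
/- If a subspace L ⊆ V ⊕ V* is isotropic with respect to the symmetric pairing ⟨(v₁,η₁),(v₂,η₂)⟩₊ = ½(η₁(v₂) + η₂(v₁)) and dim L = dim V, then L satisfies both characteristic equations: ρ(L)° = L ∩ V* and ρ*(L)° = L ∩ V. -/
/-!
Isotropy alone gives the inclusions `L ∩ V* ⊆ ρ(L)°` and `L ∩ V ⊆ ρ*(L)°`. Rank–nullity for
`ρ|_L` and `ρ*|_L` gives `dim ρ(L) + dim (L ∩ V*) = dim L = dim V` and likewise for `ρ*`, while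
`dim ρ(L) + dim ρ(L)° = dim V`; so both inclusions are between spaces of equal dimension.
-/

open Module Submodule LinearMap

theorem Submodule.finrank_map_add_finrank_comap_of_exact {K M N P : Type*} [DivisionRing K]
    [AddCommGroup M] [Module K M] [AddCommGroup N] [Module K N] [AddCommGroup P] [Module K P]
    [FiniteDimensional K M] {g : P →ₗ[K] M} {f : M →ₗ[K] N} (hg : Function.Injective g)
    (hexact : Function.Exact g f) (L : Submodule K M) :
    finrank K (L.map f) + finrank K (L.comap g) = finrank K L := by
  have h := finrank_range_add_finrank_ker (f ∘ₗ L.subtype)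
  rw [range_comp, range_subtype, ker_comp, exact_iff.mp hexact] at h
  rw [← h, ← finrank_map_subtype_eq, map_comap_subtype, inf_comm, ← map_comap_eq,
    (equivMapOfInjective g hg _).finrank_eq]

section Isotropic

variable {K V : Type*} [CommRing K] [AddCommGroup V] [Module K V]
  {L : Submodule K (V × Dual K V)}

theorem comap_inr_le_dualAnnihilator_map_fst
    (hiso : ∀ p ∈ L, ∀ q ∈ L, p.2 q.1 + q.2 p.1 = 0) :
    L.comap (inr K V (Dual K V)) ≤ (L.map (fst K V (Dual K V))).dualAnnihilator := by
  intro η hη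
  rw [mem_dualAnnihilator]
  rintro _ ⟨p, hp, rfl⟩
  simpa using hiso _ hη p hp

theorem comap_inl_le_dualCoannihilator_map_snd
    (hiso : ∀ p ∈ L, ∀ q ∈ L, p.2 q.1 + q.2 p.1 = 0) :
    L.comap (inl K V (Dual K V)) ≤ (L.map (snd K V (Dual K V))).dualCoannihilator := by
  intro v hv
  rw [mem_dualCoannihilator]
  rintro _ ⟨p, hp, rfl⟩
  simpa using hiso p hp _ hv

end Isotropic

/-- A Lagrangian subspace for the symmetric pairing `⟨,⟩₊` satisfies both
characteristic equations. -/
theorem lagrangian_plus_characteristic {V : Type*} [AddCommGroup V] [Module ℝ V]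
    [FiniteDimensional ℝ V] (L : Submodule ℝ (V × Module.Dual ℝ V))
    (hiso : ∀ p ∈ L, ∀ q ∈ L,
      (1/2 : ℝ) * (p.2 q.1 + q.2 p.1) = 0)
    (hdim : Module.finrank ℝ L = Module.finrank ℝ V) :
    (Submodule.map (LinearMap.fst ℝ V (Module.Dual ℝ V)) L).dualAnnihilator
        = Submodule.comap (LinearMap.inr ℝ V (Module.Dual ℝ V)) L
    ∧ (Submodule.map (LinearMap.snd ℝ V (Module.Dual ℝ V)) L).dualCoannihilator
        = Submodule.comap (LinearMap.inl ℝ V (Module.Dual ℝ V)) L := by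
  have hiso' : ∀ p ∈ L, ∀ q ∈ L, p.2 q.1 + q.2 p.1 = 0 := fun p hp q hq => by
    simpa using hiso p hp q hq
  constructor
  · refine (eq_of_le_of_finrank_eq (comap_inr_le_dualAnnihilator_map_fst hiso') ?_).symm
    have hL := finrank_map_add_finrank_comap_of_exact inr_injective Function.Exact.inr_fst L
    have hann := Subspace.finrank_add_finrank_dualAnnihilator_eq (L.map (fst ℝ V (Dual ℝ V)))
    omega
  · refine (eq_of_le_of_finrank_eq (comap_inl_le_dualCoannihilator_map_snd hiso') ?_).symm
    have hL := finrank_map_add_finrank_comap_of_exact inl_injective Function.Exact.inl_snd L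
    have hann := Subspace.finrank_add_finrank_dualCoannihilator_eq (L.map (snd ℝ V (Dual ℝ V)))
    omega
end

section
/- Given a subspace F ⊆ V* and a linear map Π : F → F*, the set L = {(v,η) ∈ V ⊕ V* : η ∈ F and the functional on F given by ξ ↦ ξ(v) − Π(η)(ξ) is zero} is a backward LD structure, i.e., ρ*(L)° = L ∩ V. -/
/-!
Write `L` for the graph of `Π` over `F`. Its image under `ρ*` is all of `F`: in finite dimension
every functional on `F ⊆ V*` is evaluation at some `v ∈ V`, so each `η ∈ F` has a partner `v` with
`(v, η) ∈ L`. On the other hand `(v, 0) ∈ L` says `ξ(v) = Π(0)(ξ) = 0` for all `ξ ∈ F`, i.e.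
`v ∈ F°`. Hence both sides equal `F°`.
-/

open Module

section

variable {K V : Type*} [Field K] [AddCommGroup V] [Module K V]
  {F : Submodule K (Dual K V)} {Pi : F →ₗ[K] Dual K F} {L : Submodule K (V × Dual K V)}

theorem map_snd_eq_of_forall_mem_iff [FiniteDimensional K V]
    (hL : ∀ p : V × Dual K V,
      p ∈ L ↔ ∃ hη : p.2 ∈ F, ∀ ξ : F, (ξ : Dual K V) p.1 = Pi ⟨p.2, hη⟩ ξ) :
    L.map (LinearMap.snd K V (Dual K V)) = F := by
  have eval_surjective : Function.Surjective (F.subtype : F →ₗ[K] V →ₗ[K] K).flip :=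
    (LinearMap.flip_surjective_iff₂ (V₁ := F) (V₂ := V)).mpr F.injective_subtype
  ext η
  refine ⟨?_, fun hη => ?_⟩
  · rintro ⟨p, hp, rfl⟩
    exact ((hL p).mp hp).1
  · obtain ⟨v, hv⟩ := eval_surjective (Pi ⟨η, hη⟩)
    exact ⟨(v, η), (hL _).mpr ⟨hη, fun ξ => LinearMap.congr_fun hv ξ⟩, rfl⟩

theorem comap_inl_eq_dualCoannihilator_of_forall_mem_iff
    (hL : ∀ p : V × Dual K V,
      p ∈ L ↔ ∃ hη : p.2 ∈ F, ∀ ξ : F, (ξ : Dual K V) p.1 = Pi ⟨p.2, hη⟩ ξ) :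
    L.comap (LinearMap.inl K V (Dual K V)) = F.dualCoannihilator := by
  have hPi_zero : ∀ h : (0 : Dual K V) ∈ F, Pi ⟨0, h⟩ = 0 := fun _ => map_zero Pi
  ext v
  simp only [Submodule.mem_comap, LinearMap.inl_apply, hL, hPi_zero, LinearMap.zero_apply,
    exists_prop_of_true F.zero_mem, Subtype.forall, Submodule.mem_dualCoannihilator]

end

/-- The graph construction `(F, Π) ↦ L = {(v,η) : η ∈ F, ξ(v) = Π(η)(ξ) ∀ ξ ∈ F}`
yields a backward LD structure: `ρ*(L)° = L ∩ V`. -/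
theorem pair_gives_backward_LD {V : Type*} [AddCommGroup V] [Module ℝ V]
    [FiniteDimensional ℝ V] (F : Submodule ℝ (Module.Dual ℝ V))
    (Pi : F →ₗ[ℝ] Module.Dual ℝ F)
    (L : Submodule ℝ (V × Module.Dual ℝ V))
    (hL : ∀ p : V × Module.Dual ℝ V,
      p ∈ L ↔ ∃ hη : p.2 ∈ F, ∀ ξ : F, (ξ : Module.Dual ℝ V) p.1 = Pi ⟨p.2, hη⟩ ξ) :
    (Submodule.map (LinearMap.snd ℝ V (Module.Dual ℝ V)) L).dualCoannihilator
        = Submodule.comap (LinearMap.inl ℝ V (Module.Dual ℝ V)) L := by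
  rw [map_snd_eq_of_forall_mem_iff hL, comap_inl_eq_dualCoannihilator_of_forall_mem_iff hL]
end

section
/- If L is a forward LD structure on V, then there exists a symmetric bilinear form Ψ on V and a Dirac structure L₁ on V such that L = {(v, η + Ψ(v,·)) : (v,η) ∈ L₁}. In other words, every forward LD structure is a gauge deformation of a Dirac structure by a symmetric bilinear form. -/
/-!
Write `E` for the projection of `L` to `V`. The inclusion `L ∩ V* ⊆ E°` says that the covector
component of an element of `L`, restricted to `E`, depends only (and linearly) on its vector
component; choosing a linear section of `L → E` therefore produces a bilinear form `B` with
`η(w) = B(v, w)` for all `(v, η), (w, ξ) ∈ L`. Gauging `L` by the symmetric part `Ψ` of `B`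
makes it isotropic, and the reverse inclusion `E° ⊆ L ∩ V*` gives
`dim L = dim E + dim E° = dim V`.
-/

open Module

theorem LinearMap.exists_comp_comp_eq_self {K M N : Type*} [DivisionRing K] [AddCommGroup M]
    [Module K M] [AddCommGroup N] [Module K N] (f : M →ₗ[K] N) :
    ∃ g : N →ₗ[K] M, f ∘ₗ g ∘ₗ f = f := by
  obtain ⟨s, hs⟩ := f.rangeRestrict.exists_rightInverse_of_surjective f.range_rangeRestrict
  obtain ⟨t, ht⟩ := (range f).subtype.exists_leftInverse_of_injective (range f).ker_subtype
  refine ⟨s ∘ₗ t, LinearMap.ext fun v => ?_⟩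
  have hft : t (f v) = f.rangeRestrict v := congr($ht (f.rangeRestrict v))
  simpa [hft] using congr(((range f).subtype ∘ₗ $hs) (f.rangeRestrict v))

theorem Submodule.finrank_map_fst_add_finrank_comap_inr {K M N : Type*} [DivisionRing K]
    [AddCommGroup M] [Module K M] [AddCommGroup N] [Module K N] (L : Submodule K (M × N))
    [FiniteDimensional K L] :
    finrank K (L.map (LinearMap.fst K M N)) + finrank K (L.comap (LinearMap.inr K M N))
      = finrank K L := by
  let f := (LinearMap.fst K M N).domRestrict L
  let j : L.comap (LinearMap.inr K M N) →ₗ[K] L := (LinearMap.inr K M N).restrict fun _ h => h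
  have hj : Function.Injective j := fun a b hab => Subtype.ext congr(($hab : M × N).2)
  have hker : LinearMap.ker f = LinearMap.range j := by
    ext ⟨⟨v, η⟩, hx⟩
    simp only [LinearMap.mem_ker, LinearMap.mem_range]
    constructor
    · rintro (rfl : v = 0)
      exact ⟨⟨η, hx⟩, rfl⟩
    · rintro ⟨_, hη⟩
      exact congr(($hη.symm : M × N).1)
  rw [← f.finrank_range_add_finrank_ker, LinearMap.range_domRestrict, hker,
    LinearMap.finrank_range_of_inj hj]

section Dual

variable {K V : Type*} [Field K] [AddCommGroup V] [Module K V]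

theorem exists_snd_apply_fst_eq_of_comap_inr_le {L : Submodule K (V × Dual K V)}
    (hL : L.comap (LinearMap.inr K V (Dual K V))
      ≤ (L.map (LinearMap.fst K V (Dual K V))).dualAnnihilator) :
    ∃ B : V →ₗ[K] Dual K V, ∀ x ∈ L, ∀ y ∈ L, x.2 y.1 = B x.1 y.1 := by
  obtain ⟨g, hg⟩ :=
    LinearMap.exists_comp_comp_eq_self (M := L) ((LinearMap.fst K V (Dual K V)).domRestrict L)
  refine ⟨LinearMap.snd K V (Dual K V) ∘ₗ L.subtype ∘ₗ g, fun x hx y hy => ?_⟩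
  set z : L := g x.1
  have hz : (z : V × Dual K V).1 = x.1 := congr($hg ⟨x, hx⟩)
  have hxz : x.2 - (z : V × Dual K V).2 ∈ L.comap (LinearMap.inr K V (Dual K V)) := by
    have : x - z = ((0 : V), x.2 - (z : V × Dual K V).2) := Prod.ext (by simp [hz]) rfl
    simpa [this] using L.sub_mem hx z.2
  have := (Submodule.mem_dualAnnihilator _).mp (hL hxz) y.1 ⟨y, hy, rfl⟩
  simpa [sub_eq_zero] using this

theorem finrank_eq_of_dualAnnihilator_map_fst_eq_comap_inr [FiniteDimensional K V]
    {L : Submodule K (V × Dual K V)}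
    (h : (L.map (LinearMap.fst K V (Dual K V))).dualAnnihilator
      = L.comap (LinearMap.inr K V (Dual K V))) :
    finrank K L = finrank K V := by
  rw [← L.finrank_map_fst_add_finrank_comap_inr, ← h,
    Subspace.finrank_add_finrank_dualAnnihilator_eq]

end Dual

section Gauge

variable {R V : Type*} [CommRing R] [AddCommGroup V] [Module R V]

def gaugeTransform (Ψ : V →ₗ[R] Dual R V) : (V × Dual R V) ≃ₗ[R] (V × Dual R V) :=
  (LinearEquiv.refl R V).skewProd (LinearEquiv.refl R (Dual R V)) Ψ

@[simp]
theorem gaugeTransform_symm_apply (Ψ : V →ₗ[R] Dual R V) (p : V × Dual R V) :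
    (gaugeTransform Ψ).symm p = (p.1, p.2 - Ψ p.1) :=
  rfl

theorem isotropic_map_gaugeTransform_symm {L : Submodule R (V × Dual R V)}
    {Ψ : V →ₗ[R] Dual R V}
    (hΨ : ∀ x ∈ L, ∀ y ∈ L, x.2 y.1 + y.2 x.1 = Ψ x.1 y.1 + Ψ y.1 x.1) :
    ∀ p ∈ L.map (gaugeTransform Ψ).symm.toLinearMap,
      ∀ q ∈ L.map (gaugeTransform Ψ).symm.toLinearMap, p.2 q.1 + q.2 p.1 = 0 := by
  rintro _ ⟨x, hx, rfl⟩ _ ⟨y, hy, rfl⟩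
  simp only [LinearEquiv.coe_coe, gaugeTransform_symm_apply, LinearMap.sub_apply]
  linear_combination hΨ x hx y hy

end Gauge

theorem Submodule.mem_iff_exists_mem_map_symm {R M : Type*} [Semiring R] [AddCommMonoid M]
    [Module R M] (L : Submodule R M) (e : M ≃ₗ[R] M) (p : M) :
    p ∈ L ↔ ∃ q ∈ L.map e.symm.toLinearMap, p = e q := by
  refine ⟨fun hp => ⟨e.symm p, mem_map_of_mem hp, (e.apply_symm_apply p).symm⟩, ?_⟩
  rintro ⟨_, ⟨x, hx, rfl⟩, rfl⟩
  simpa using hx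

/-- Every forward LD structure is a gauge deformation of a Dirac structure by a
symmetric bilinear form. -/
theorem forward_LD_is_deformed_dirac {V : Type*} [AddCommGroup V] [Module ℝ V]
    [FiniteDimensional ℝ V] (L : Submodule ℝ (V × Module.Dual ℝ V))
    (h : (Submodule.map (LinearMap.fst ℝ V (Module.Dual ℝ V)) L).dualAnnihilator
        = Submodule.comap (LinearMap.inr ℝ V (Module.Dual ℝ V)) L) :
    ∃ (Ψ : V →ₗ[ℝ] V →ₗ[ℝ] ℝ) (L₁ : Submodule ℝ (V × Module.Dual ℝ V)),
      (∀ v w : V, Ψ v w = Ψ w v)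
      ∧ Module.finrank ℝ L₁ = Module.finrank ℝ V
      ∧ (∀ p ∈ L₁, ∀ q ∈ L₁, (1/2 : ℝ) * (p.2 q.1 + q.2 p.1) = 0)
      ∧ (∀ p : V × Module.Dual ℝ V, p ∈ L ↔ ∃ q ∈ L₁, p = (q.1, q.2 + Ψ q.1)) := by
  obtain ⟨B, hB⟩ := exists_snd_apply_fst_eq_of_comap_inr_le h.ge
  set Ψ : V →ₗ[ℝ] V →ₗ[ℝ] ℝ := (1 / 2 : ℝ) • (B + B.flip)
  have hΨ : ∀ v w, Ψ v w = (B v w + B w v) / 2 := fun v w => by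
    simp only [Ψ, LinearMap.smul_apply, LinearMap.add_apply, LinearMap.flip_apply, smul_eq_mul]
    ring
  have hisotropic := isotropic_map_gaugeTransform_symm (L := L) (Ψ := Ψ) fun x hx y hy => by
    rw [hΨ, hΨ, hB x hx y hy, hB y hy x hx]
    ring
  refine ⟨Ψ, L.map (gaugeTransform Ψ).symm.toLinearMap, fun v w => by rw [hΨ, hΨ, add_comm], ?_,
    fun p hp q hq => by rw [hisotropic p hp q hq, mul_zero],
    L.mem_iff_exists_mem_map_symm (gaugeTransform Ψ)⟩
  rw [LinearEquiv.finrank_map_eq, finrank_eq_of_dualAnnihilator_map_fst_eq_comap_inr h]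
end

section
/- A subspace L ⊆ V ⊕ V* is a separable Dirac structure (η₁(v₂) = 0 for all (v₁,η₁),(v₂,η₂) ∈ L, and dim L = dim V, and L isotropic for ⟨,⟩₊) if and only if L = K ⊕ K° for some subspace K ⊆ V, i.e., L = {(v,η) : v ∈ K, η ∈ K°}. -/
/-!
The Dirac condition `η₁(v₂) = 0` on `L` says exactly that the covector part of `L` annihilates
its vector part `K := pr₁ L`, i.e. `L ≤ K ⊕ K°`. Since `dim K + dim K° = dim V`, the dimension
condition forces equality. Conversely `K ⊕ K°` has dimension `dim V`, and both pairings vanish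
on it termwise.
-/

open Module

section

variable {R M : Type*} [CommRing R] [AddCommGroup M] [Module R M]

theorem Submodule.le_prod_dualAnnihilator_map_fst {L : Submodule R (M × Dual R M)}
    (hL : ∀ p ∈ L, ∀ q ∈ L, p.2 q.1 = 0) :
    L ≤ (L.map (LinearMap.fst R M (Dual R M))).prod
      (L.map (LinearMap.fst R M (Dual R M))).dualAnnihilator := by
  intro p hp
  refine ⟨⟨p, hp, rfl⟩, (Submodule.mem_dualAnnihilator _).mpr ?_⟩
  rintro _ ⟨q, hq, rfl⟩
  exact hL p hp q hq

theorem Submodule.apply_eq_zero_of_mem_prod_dualAnnihilator {K : Submodule R M}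
    {p q : M × Dual R M} (hp : p ∈ K.prod K.dualAnnihilator) (hq : q ∈ K.prod K.dualAnnihilator) :
    p.2 q.1 = 0 :=
  (Submodule.mem_dualAnnihilator _).mp hp.2 _ hq.1

end

theorem Submodule.finrank_prod {𝕜 M N : Type*} [DivisionRing 𝕜] [AddCommGroup M] [AddCommGroup N]
    [Module 𝕜 M] [Module 𝕜 N] (p : Submodule 𝕜 M) (q : Submodule 𝕜 N)
    [FiniteDimensional 𝕜 p] [FiniteDimensional 𝕜 q] :
    finrank 𝕜 (p.prod q) = finrank 𝕜 p + finrank 𝕜 q := by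
  have hinj : Function.Injective (p.subtype.prodMap q.subtype) :=
    Prod.map_injective.mpr ⟨p.injective_subtype, q.injective_subtype⟩
  rw [← Module.finrank_prod, ← LinearMap.finrank_range_of_inj hinj, LinearMap.range_prodMap,
    Submodule.range_subtype, Submodule.range_subtype]

theorem Subspace.finrank_prod_dualAnnihilator {𝕜 V : Type*} [Field 𝕜] [AddCommGroup V]
    [Module 𝕜 V] [FiniteDimensional 𝕜 V] (K : Subspace 𝕜 V) :
    finrank 𝕜 (K.prod K.dualAnnihilator) = finrank 𝕜 V := by
  rw [Submodule.finrank_prod, Subspace.finrank_add_finrank_dualAnnihilator_eq]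

/-- `L` is a separable Dirac structure iff `L = K ⊕ K°` for some subspace `K ⊆ V`. -/
theorem separable_dirac_iff_product {V : Type*} [AddCommGroup V] [Module ℝ V]
    [FiniteDimensional ℝ V] (L : Submodule ℝ (V × Module.Dual ℝ V)) :
    ((∀ p ∈ L, ∀ q ∈ L, p.2 q.1 = 0)
      ∧ Module.finrank ℝ L = Module.finrank ℝ V
      ∧ (∀ p ∈ L, ∀ q ∈ L, (1/2 : ℝ) * (p.2 q.1 + q.2 p.1) = 0))
    ↔ (∃ K : Submodule ℝ V,
        ∀ p : V × Module.Dual ℝ V, p ∈ L ↔ p.1 ∈ K ∧ p.2 ∈ K.dualAnnihilator) := by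
  constructor
  · rintro ⟨hdirac, hdim, -⟩
    set K := L.map (LinearMap.fst ℝ V (Dual ℝ V))
    have hL : L = K.prod K.dualAnnihilator :=
      Submodule.eq_of_le_of_finrank_eq (Submodule.le_prod_dualAnnihilator_map_fst hdirac)
        (by rw [hdim, Subspace.finrank_prod_dualAnnihilator])
    exact ⟨K, fun p => by rw [hL]; rfl⟩
  · rintro ⟨K, hK⟩
    obtain rfl : L = K.prod K.dualAnnihilator := Submodule.ext hK
    have hpair : ∀ p ∈ K.prod K.dualAnnihilator, ∀ q ∈ K.prod K.dualAnnihilator, p.2 q.1 = 0 :=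
      fun p hp q hq => Submodule.apply_eq_zero_of_mem_prod_dualAnnihilator hp hq
    refine ⟨hpair, Subspace.finrank_prod_dualAnnihilator K, fun p hp q hq => ?_⟩
    rw [hpair p hp q hq, hpair q hq p hp, add_zero, mul_zero]
end
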